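/- Let n ≥ 3 and A₁, A₂, A₃ be real symmetric n×n matrices. Suppose there exists s ∈ ℝ³ such that s₁A₁ + s₂A₂ + s₃A₃ is positive definite. Then the joint numerical range {(xᵀA₁x, xᵀA₂x, xᵀA₃x) : x ∈ ℝⁿ} is a convex cone in ℝ³. -/

import Mathlib

/-!
Normalise by the positive definite form `P = ∑ sᵢ qᵢ`: it suffices that the image of the level set
`{P = 1}` under `q = (q₁, q₂, q₃)` is convex, since the range of `q` is the cone over it.
For `x`, `y` in the level set with `q x ≠ q y`, put `v = q x - q y`, so `s ⬝ v = 0`, and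
`l = s × v`. The points of the plane `{s ⬝ · = 1}` on the line through `q x` and `q y` are those
with `l ⬝ · = c`, so `x` and `y` are isotropic for `R = ∑ lᵢ qᵢ - c P`. In dimension at least
three, the nonzero isotropic vectors of any quadratic form join `x` to `y` or to `-y`. Along such
a path, normalised to `P = 1`, the image of `q` stays on that line, and the intermediate value
theorem applied to `v ⬝ q` reaches every point of the segment.
-/

open Matrix Set Module QuadraticMap

section Isotropic

variable {V : Type*} [AddCommGroup V] [Module ℝ V]

def isotropicVectors (Q : QuadraticForm ℝ V) : Set V :=
  {v | v ≠ 0 ∧ Q v = 0}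

theorem exists_ne_zero_polar_eq_zero (hV : 2 < finrank ℝ V) (Q : QuadraticForm ℝ V) (x y : V) :
    ∃ u ≠ 0, polar Q x u = 0 ∧ polar Q y u = 0 := by
  have : FiniteDimensional ℝ V := Module.finite_of_finrank_pos (by omega)
  let f : V →ₗ[ℝ] ℝ × ℝ := (polarBilin Q x).prod (polarBilin Q y)
  obtain ⟨u, hu, hu0⟩ := Submodule.exists_mem_ne_zero_of_ne_bot
    (LinearMap.ker_ne_bot_of_finrank_lt (f := f) (by simpa using hV))
  exact ⟨u, hu0, by simpa [f] using hu⟩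

variable {Q : QuadraticForm ℝ V} {x y u : V}

theorem linearIndependent_pair_of_polar (hxy : polar Q x y ≠ 0) (huy : polar Q u y = 0)
    (hu : u ≠ 0) : LinearIndependent ℝ ![x, u] := by
  refine LinearIndependent.pair_iff.mpr fun a c h => ?_
  have := congrArg (polar Q · y) h
  simp only [polar_add_left, polar_smul_left, huy, polar_zero_left, smul_eq_mul, mul_zero,
    add_zero, mul_eq_zero, hxy, or_false] at this
  subst this
  simpa [hu] using h

variable [TopologicalSpace V] [IsTopologicalAddGroup V] [ContinuousSMul ℝ V]

theorem joinedIn_isotropicVectors_of_polar_eq_zero (hx : Q x = 0) (hy : Q y = 0)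
    (hxy : polar Q x y = 0) (hind : LinearIndependent ℝ ![x, y]) :
    JoinedIn (isotropicVectors Q) x y := by
  refine JoinedIn.of_segment_subset ?_
  rintro _ ⟨a, b, -, -, hab, rfl⟩
  refine ⟨fun h => ?_, ?_⟩
  · obtain ⟨rfl, rfl⟩ := LinearIndependent.pair_iff.mp hind a b h
    norm_num at hab
  · simp [QuadraticMap.map_add, QuadraticMap.map_smul, polar_smul_left, polar_smul_right, hx, hy,
      hxy]

theorem joinedIn_isotropicVectors_of_polar_mul_neg (hx : Q x = 0) (hy : Q y = 0)
    (hxu : polar Q x u = 0) (hyu : polar Q y u = 0) (hneg : polar Q x y * Q u < 0) :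
    JoinedIn (isotropicVectors Q) x y := by
  have hb : polar Q x y ≠ 0 := by rintro h; simp [h] at hneg
  have hu : Q u ≠ 0 := by rintro h; simp [h] at hneg
  set κ := -(polar Q x y / Q u)
  have hκ : 0 ≤ κ := by
    rw [neg_nonneg, show polar Q x y / Q u = polar Q x y * Q u / Q u ^ 2 by field_simp]
    exact div_nonpos_of_nonpos_of_nonneg hneg.le (sq_nonneg _)
  -- `Q ((1 - t) • x + t • y + γ • u) = t * (1 - t) * polar Q x y + γ ^ 2 * Q u`, which vanishes
  -- for `γ ^ 2 = κ * t * (1 - t)`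
  refine JoinedIn.ofLine (f := fun t => (1 - t) • x + t • y + √(κ * (t * (1 - t))) • u)
    (by fun_prop) (by simp) (by simp) ?_
  rintro _ ⟨t, ht, rfl⟩
  have hyx : polar Q y x = polar Q x y := polar_comm _ _ _
  refine ⟨fun h0 => hb ?_, ?_⟩
  · -- pairing the path with `x` and with `y` gives `t * polar Q x y` and `(1 - t) * polar Q x y`
    have h1 := congrArg (polar Q x) h0
    have h2 := congrArg (polar Q y) h0
    simp only [polar_add_right, polar_smul_right, polar_self, hx, nsmul_zero, smul_eq_mul,
      mul_zero, zero_add, hxu, add_zero, polar_zero_right, mul_eq_zero, hyx, hy, hyu] at h1 h2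
    rcases h1 with rfl | h1
    · simpa using h2
    · exact h1
  · simp only [QuadraticMap.map_add, QuadraticMap.map_smul, hx, smul_eq_mul, mul_zero, hy,
      add_zero, polar_smul_right, polar_smul_left, zero_add, polar_add_left, hxu, hyu]
    rw [Real.mul_self_sqrt (mul_nonneg hκ (mul_nonneg ht.1 (sub_nonneg.2 ht.2)))]
    simp only [κ]
    field_simp
    ring

theorem joinedIn_isotropicVectors_or_neg (hV : 2 < finrank ℝ V) (hx : Q x = 0) (hy : Q y = 0)
    (hind : LinearIndependent ℝ ![x, y]) :
    JoinedIn (isotropicVectors Q) x y ∨ JoinedIn (isotropicVectors Q) x (-y) := by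
  by_cases hb : polar Q x y = 0
  · exact .inl (joinedIn_isotropicVectors_of_polar_eq_zero hx hy hb hind)
  obtain ⟨u, hu0, hxu, hyu⟩ := exists_ne_zero_polar_eq_zero hV Q x y
  rcases lt_trichotomy (polar Q x y * Q u) 0 with hneg | hzero | hpos
  · exact .inl (joinedIn_isotropicVectors_of_polar_mul_neg hx hy hxu hyu hneg)
  · have hu : Q u = 0 := (mul_eq_zero.mp hzero).resolve_left hb
    have huy : polar Q u y = 0 := by rw [polar_comm]; exact hyu
    have hux : polar Q u x = 0 := by rw [polar_comm]; exact hxu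
    have hyx : polar Q y x ≠ 0 := by rwa [polar_comm]
    exact .inl ((joinedIn_isotropicVectors_of_polar_eq_zero hx hu hxu
      (linearIndependent_pair_of_polar hb huy hu0)).trans
      (joinedIn_isotropicVectors_of_polar_eq_zero hu hy huy
        (LinearIndependent.pair_symm_iff.mp (linearIndependent_pair_of_polar hyx hux hu0))))
  · refine .inr (joinedIn_isotropicVectors_of_polar_mul_neg hx (by rwa [QuadraticMap.map_neg])
      hxu (by rw [polar_neg_left, hyu, neg_zero]) ?_)
    rw [polar_neg_right, neg_mul]
    exact neg_neg_of_pos hpos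

end Isotropic

theorem eq_zero_of_dotProduct_eq_zero_of_cross_eq_zero {s d : Fin 3 → ℝ} (hs : s ≠ 0)
    (h₁ : s ⬝ᵥ d = 0) (h₂ : s ⨯₃ d = 0) : d = 0 := by
  have h := cross_dot_cross s d s d
  rw [h₂, zero_dotProduct, h₁, zero_mul, sub_zero, eq_comm, mul_eq_zero] at h
  exact h.resolve_left (dotProduct_self_eq_zero.not.mpr hs) |> dotProduct_self_eq_zero.mp

theorem eq_zero_of_dotProduct_cross_eq_zero {s v d : Fin 3 → ℝ} (hs : s ≠ 0) (hv : v ≠ 0)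
    (hsv : s ⬝ᵥ v = 0) (h₁ : s ⬝ᵥ d = 0) (h₂ : v ⬝ᵥ d = 0) (h₃ : s ⨯₃ v ⬝ᵥ d = 0) : d = 0 := by
  have hl : s ⨯₃ v ≠ 0 := fun h => hv (eq_zero_of_dotProduct_eq_zero_of_cross_eq_zero hs hsv h)
  refine eq_zero_of_dotProduct_eq_zero_of_cross_eq_zero hl h₃ ?_
  rw [← cross_anticomm, cross_cross_eq_smul_sub_smul', dotProduct_comm d v, h₂, h₁]
  simp

section JointMap

variable {V ι : Type*} [AddCommGroup V] [Module ℝ V]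

def jointMap (q : ι → QuadraticForm ℝ V) (x : V) : ι → ℝ := fun i => q i x

theorem QuadraticMap.map_inv_sqrt_smul (Q : QuadraticForm ℝ V) {a : ℝ} (ha : 0 ≤ a) (z : V) :
    Q ((√a)⁻¹ • z) = Q z / a := by
  rw [QuadraticMap.map_smul, ← mul_inv, Real.mul_self_sqrt ha, smul_eq_mul, inv_mul_eq_div]

variable {q : ι → QuadraticForm ℝ V}

theorem jointMap_smul (a : ℝ) (x : V) : jointMap q (a • x) = (a * a) • jointMap q x := by
  ext i
  simp [jointMap, QuadraticMap.map_smul]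

theorem jointMap_inv_sqrt_smul {a : ℝ} (ha : 0 ≤ a) (x : V) :
    jointMap q ((√a)⁻¹ • x) = a⁻¹ • jointMap q x := by
  rw [jointMap_smul, ← mul_inv, Real.mul_self_sqrt ha]

theorem jointMap_zero : jointMap q 0 = 0 := by
  ext i
  simp [jointMap]

theorem jointMap_neg (x : V) : jointMap q (-x) = jointMap q x := by
  ext i
  simp [jointMap]

theorem dotProduct_jointMap [Fintype ι] (l : ι → ℝ) (x : V) :
    l ⬝ᵥ jointMap q x = (∑ i, l i • q i) x := by
  simp [dotProduct, jointMap]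

theorem smul_mem_range_jointMap {c : ℝ} (hc : 0 ≤ c) {y : ι → ℝ} (hy : y ∈ range (jointMap q)) :
    c • y ∈ range (jointMap q) := by
  obtain ⟨x, rfl⟩ := hy
  exact ⟨√c • x, by rw [jointMap_smul, Real.mul_self_sqrt hc]⟩

theorem linearIndependent_pair_of_jointMap_ne {P : QuadraticForm ℝ V} {x y : V} (hx : P x = 1)
    (hy : P y = 1) (hxy : jointMap q x ≠ jointMap q y) : LinearIndependent ℝ ![x, y] := by
  have hx0 : x ≠ 0 := by rintro rfl; simp at hx
  refine (LinearIndependent.pair_iff' hx0).mpr fun a hax => hxy ?_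
  have ha : a * a = 1 := by rwa [← hax, QuadraticMap.map_smul, hx, smul_eq_mul, mul_one] at hy
  rw [← hax, jointMap_smul, ha, one_smul]

end JointMap

section Convexity

variable {V : Type*} [NormedAddCommGroup V] [NormedSpace ℝ V] [FiniteDimensional ℝ V]

theorem QuadraticMap.continuous_of_finiteDimensional (Q : QuadraticForm ℝ V) : Continuous Q := by
  have h : ⇑Q = fun x => 2⁻¹ * (polarBilin Q).toContinuousBilinearMap x x := by
    ext x
    simp [polar_self]
  rw [h]
  exact continuous_const.mul
    ((polarBilin Q).toContinuousBilinearMap.continuous.clm_apply continuous_id)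

theorem exists_eq_of_joinedIn_isotropicVectors {R P F : QuadraticForm ℝ V} (hP : P.PosDef)
    {x y : V} (h : JoinedIn (isotropicVectors R) x y) (hx : P x = 1) (hy : P y = 1) {c : ℝ}
    (hc : c ∈ uIcc (F x) (F y)) : ∃ z, R z = 0 ∧ P z = 1 ∧ F z = c := by
  let γ := h.somePath
  have hγ (t : unitInterval) : 0 < P (γ t) := hP _ (h.somePath_mem t).1
  let φ : unitInterval → ℝ := fun t => F (γ t) / P (γ t)
  have hφ : Continuous φ :=
    (F.continuous_of_finiteDimensional.comp γ.continuous).div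
      (P.continuous_of_finiteDimensional.comp γ.continuous) fun t => (hγ t).ne'
  obtain ⟨t, ht⟩ : c ∈ range φ := by
    have h0 : φ 0 = F x := by simp [φ, γ, hx]
    have h1 : φ 1 = F y := by simp [φ, γ, hy]
    rcases mem_uIcc.mp hc with hc | hc
    · exact intermediate_value_univ 0 1 hφ (by rwa [h0, h1])
    · exact intermediate_value_univ 1 0 hφ (by rwa [h0, h1])
  refine ⟨(√(P (γ t)))⁻¹ • γ t, ?_, ?_, ?_⟩ <;> rw [map_inv_sqrt_smul _ (hγ t).le]
  · rw [(h.somePath_mem t).2, zero_div]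
  · exact div_self (hγ t).ne'
  · exact ht

variable {q : Fin 3 → QuadraticForm ℝ V} {s : Fin 3 → ℝ}

theorem convex_jointMap_image (hV : 2 < finrank ℝ V) (hs : (∑ i, s i • q i).PosDef) :
    Convex ℝ (jointMap q '' {x | (∑ i, s i • q i) x = 1}) := by
  set P := ∑ i, s i • q i
  rintro _ ⟨x, hx, rfl⟩ _ ⟨y, hy, rfl⟩ a b ha hb hab
  by_cases hxy : jointMap q x = jointMap q y
  · exact ⟨x, hx, by rw [← hxy, ← add_smul, hab, one_smul]⟩
  set v := jointMap q x - jointMap q y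
  have hv : v ≠ 0 := sub_ne_zero.mpr hxy
  have hs0 : s ≠ 0 := by rintro rfl; simp [P] at hx
  have hsv : s ⬝ᵥ v = 0 := by
    simp only [v, dotProduct_sub, dotProduct_jointMap]
    rw [hx, hy, sub_self]
  set l := s ⨯₃ v
  set c := l ⬝ᵥ jointMap q x
  have hly : l ⬝ᵥ jointMap q y = c := by
    have : l ⬝ᵥ v = 0 := by rw [dotProduct_comm]; exact dot_cross_self s v
    rw [dotProduct_sub, sub_eq_zero] at this
    exact this.symm
  set R := ∑ i, l i • q i - c • P
  have hR (z : V) : R z = l ⬝ᵥ jointMap q z - c * P z := by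
    simp [R, dotProduct_jointMap]
  obtain ⟨y', hy'q, hy'P, hjoin⟩ : ∃ y', jointMap q y' = jointMap q y ∧ P y' = 1 ∧
      JoinedIn (isotropicVectors R) x y' := by
    rcases joinedIn_isotropicVectors_or_neg hV (by rw [hR, hx, mul_one, sub_self])
      (by rw [hR, hy, hly, mul_one, sub_self]) (linearIndependent_pair_of_jointMap_ne hx hy hxy)
      with h | h
    · exact ⟨y, rfl, hy, h⟩
    · exact ⟨-y, jointMap_neg y, by rwa [QuadraticMap.map_neg], h⟩
  set F := ∑ i, v i • q i
  have hF (z : V) : F z = v ⬝ᵥ jointMap q z := (dotProduct_jointMap v z).symm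
  obtain ⟨z, hRz, hPz, hFz⟩ := exists_eq_of_joinedIn_isotropicVectors (F := F) hs hjoin hx hy'P
    ((convex_uIcc (F x) (F y')) left_mem_uIcc right_mem_uIcc ha hb hab)
  refine ⟨z, hPz, sub_eq_zero.mp (eq_zero_of_dotProduct_cross_eq_zero hs0 hv hsv ?_ ?_ ?_)⟩
  · simp only [dotProduct_sub, dotProduct_add, dotProduct_smul, dotProduct_jointMap, smul_eq_mul]
    rw [hPz, hx, hy, ← add_mul, hab, one_mul, sub_self]
  · simp only [dotProduct_sub, dotProduct_add, dotProduct_smul, ← hF, smul_eq_mul]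
    rw [hFz, hF y', hy'q, hF y, smul_eq_mul, smul_eq_mul, sub_self]
  · have hlz : l ⬝ᵥ jointMap q z = c := by
      rw [← sub_eq_zero, ← mul_one c, ← hPz, ← hR, hRz]
    simp only [dotProduct_sub, dotProduct_add, dotProduct_smul, smul_eq_mul]
    rw [hlz, hly, ← add_mul, hab, one_mul, sub_self]

theorem add_mem_range_jointMap (hV : 2 < finrank ℝ V) (hs : (∑ i, s i • q i).PosDef) (x y : V) :
    jointMap q x + jointMap q y ∈ range (jointMap q) := by
  set P := ∑ i, s i • q i
  obtain rfl | hx := eq_or_ne x 0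
  · rw [jointMap_zero, zero_add]
    exact mem_range_self y
  obtain rfl | hy := eq_or_ne y 0
  · rw [jointMap_zero, add_zero]
    exact mem_range_self x
  have hPx := hs x hx
  have hPy := hs y hy
  have hPxy : 0 < P x + P y := add_pos hPx hPy
  have hunit {z : V} (hz : 0 < P z) : (√(P z))⁻¹ • z ∈ {z | P z = 1} := by
    rw [mem_ofPred_eq, map_inv_sqrt_smul _ hz.le, div_self hz.ne']
  obtain ⟨z, -, hz⟩ := convex_jointMap_image hV hs (mem_image_of_mem _ (hunit hPx))
    (mem_image_of_mem _ (hunit hPy)) (div_nonneg hPx.le hPxy.le) (div_nonneg hPy.le hPxy.le)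
    (by rw [← add_div, div_self hPxy.ne'])
  rw [jointMap_inv_sqrt_smul hPx.le, jointMap_inv_sqrt_smul hPy.le] at hz
  convert smul_mem_range_jointMap hPxy.le (mem_range_self z) using 1
  rw [hz]
  match_scalars <;> field_simp

theorem convex_range_jointMap (hV : 2 < finrank ℝ V) (hs : (∑ i, s i • q i).PosDef) :
    Convex ℝ (range (jointMap q)) := by
  rintro _ ⟨x, rfl⟩ _ ⟨y, rfl⟩ a b ha hb -
  obtain ⟨x', hx'⟩ := smul_mem_range_jointMap ha (mem_range_self (f := jointMap q) x)
  obtain ⟨y', hy'⟩ := smul_mem_range_jointMap hb (mem_range_self (f := jointMap q) y)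
  rw [← hx', ← hy']
  exact add_mem_range_jointMap hV hs x' y'

end Convexity

theorem polyak_convexity (n : ℕ) (hn : 3 ≤ n)
    (A₁ A₂ A₃ : Matrix (Fin n) (Fin n) ℝ)
    (hs : ∃ s : Fin 3 → ℝ, (s 0 • A₁ + s 1 • A₂ + s 2 • A₃).PosDef) :
    Convex ℝ {y : Fin 3 → ℝ | ∃ x : Fin n → ℝ,
        y = ![x ⬝ᵥ A₁ *ᵥ x, x ⬝ᵥ A₂ *ᵥ x, x ⬝ᵥ A₃ *ᵥ x]} ∧
    ∀ y ∈ {y : Fin 3 → ℝ | ∃ x : Fin n → ℝ,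
        y = ![x ⬝ᵥ A₁ *ᵥ x, x ⬝ᵥ A₂ *ᵥ x, x ⬝ᵥ A₃ *ᵥ x]},
      ∀ c : ℝ, 0 ≤ c → c • y ∈ {y : Fin 3 → ℝ | ∃ x : Fin n → ℝ,
        y = ![x ⬝ᵥ A₁ *ᵥ x, x ⬝ᵥ A₂ *ᵥ x, x ⬝ᵥ A₃ *ᵥ x]} := by
  obtain ⟨s, hs⟩ := hs
  set q := ![A₁.toQuadraticForm', A₂.toQuadraticForm', A₃.toQuadraticForm']
  have hq (A : Matrix (Fin n) (Fin n) ℝ) (x : Fin n → ℝ) : A.toQuadraticForm' x = x ⬝ᵥ A *ᵥ x := by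
    simp [toQuadraticForm', toLinearMap₂'_apply']
  have hrange : {y : Fin 3 → ℝ | ∃ x : Fin n → ℝ,
      y = ![x ⬝ᵥ A₁ *ᵥ x, x ⬝ᵥ A₂ *ᵥ x, x ⬝ᵥ A₃ *ᵥ x]} = range (jointMap q) := by
    have hjoint (x : Fin n → ℝ) :
        jointMap q x = ![x ⬝ᵥ A₁ *ᵥ x, x ⬝ᵥ A₂ *ᵥ x, x ⬝ᵥ A₃ *ᵥ x] := by
      ext i
      fin_cases i <;> simp [jointMap, q, hq]
    ext y
    simp only [mem_ofPred_eq, mem_range, hjoint, eq_comm]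
  have hP : (∑ i, s i • q i).PosDef := by
    convert hs.toQuadraticForm'
    ext x
    simp [q, Fin.sum_univ_three, hq, add_mulVec, smul_mulVec]
  have hV : 2 < finrank ℝ (Fin n → ℝ) := by
    rw [finrank_fin_fun]
    omega
  rw [hrange]
  exact ⟨convex_range_jointMap hV hP, fun y hy c hc => smul_mem_range_jointMap hc hy⟩
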